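/- arXiv:2403.13178 — 4 statements merged into one kernel-verified Lean document; each statement's English description precedes it below -/
import Mathlib

section
/- Let n, p̃ be positive natural numbers, let H be a real n×p̃ matrix, let ε > 0, σ > 0, and let N, m > 0 be real scalars (m playing the role of the minibatch size n and N the pseudo-population size). Set B = ε·I_{p̃}, R = 2σ²·I_n, K = B Hᵀ (H B Hᵀ + R)⁻¹ (noting that H B Hᵀ + R is positive definite, hence invertible), and Σ = (m/N)·(I_{p̃} − K H). Then for any vectors φ, u, w ∈ ℝ^{p̃} and r, v ∈ ℝⁿ, if φᶠ = φ + (ε/2)(m/N)·u + w and φᵃ = φᶠ + K(r − Hφᶠ − v), then φᵃ = φ + (ε/2)·Σ·(u + (N/(m σ²))·Hᵀ(r − Hφ)) + (I − KH)w − Kv. (This is the algebraic core of Lemma 1: the forecast–analysis step of the LKTD prototype equals a preconditioned Langevin/SGLD step with preconditioner Σ.) -/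
/-!
The gain `K = B Hᵀ S⁻¹`, `S = H B Hᵀ + R`, satisfies `K S = B Hᵀ`, hence `(I - K H) B Hᵀ = K R`.
For `B = ε I` and `R = 2σ² I` this reads `(I - K H) Hᵀ = (2σ²/ε) K`, so the preconditioned
likelihood gradient `(ε/2) Σ (N/(mσ²)) Hᵀ (r - Hφ)` is exactly the innovation term `K (r - Hφ)`;
everything else is linear bookkeeping.
-/

open Matrix

theorem posDef_mul_mul_transpose_add {m n : Type*} [Fintype m] [Fintype n]
    (H : Matrix n m ℝ) {B : Matrix m m ℝ} {R : Matrix n n ℝ}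
    (hB : B.PosSemidef) (hR : R.PosDef) : (H * B * Hᵀ + R).PosDef := by
  simpa using PosDef.posSemidef_add (hB.mul_mul_conjTranspose_same H) hR

theorem one_sub_mul_mul_mul_transpose_eq_mul_of_mul_eq {m n 𝕜 : Type*} [Fintype m] [Fintype n]
    [DecidableEq m] [CommRing 𝕜]
    {H : Matrix n m 𝕜} {B : Matrix m m 𝕜} {R : Matrix n n 𝕜} {K : Matrix m n 𝕜}
    (hK : K * (H * B * Hᵀ + R) = B * Hᵀ) : (1 - K * H) * B * Hᵀ = K * R := by
  rw [Matrix.sub_mul, Matrix.sub_mul, Matrix.one_mul, ← hK, Matrix.mul_add]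
  simp only [Matrix.mul_assoc]
  abel

theorem stmt_0_general (n p : ℕ)
    (H : Matrix (Fin n) (Fin p) ℝ) (ε σ N m : ℝ)
    (hε : 0 < ε) (hσ : 0 < σ) (hN : 0 < N) (hm : 0 < m)
    (B : Matrix (Fin p) (Fin p) ℝ) (hB : B = ε • (1 : Matrix (Fin p) (Fin p) ℝ))
    (R : Matrix (Fin n) (Fin n) ℝ)
    (hR : R = (2 * σ ^ 2) • (1 : Matrix (Fin n) (Fin n) ℝ))
    (K : Matrix (Fin p) (Fin n) ℝ) (hK : K = B * Hᵀ * (H * B * Hᵀ + R)⁻¹)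
    (Sg : Matrix (Fin p) (Fin p) ℝ)
    (hSg : Sg = (m / N) • ((1 : Matrix (Fin p) (Fin p) ℝ) - K * H))
    (φ u w φf φa : Fin p → ℝ) (r v : Fin n → ℝ)
    (hφf : φf = φ + ((ε / 2) * (m / N)) • u + w)
    (hφa : φa = φf + K.mulVec (r - H.mulVec φf - v)) :
    (H * B * Hᵀ + R).PosDef ∧
    φa = φ + (ε / 2) • Sg.mulVec (u + (N / (m * σ ^ 2)) • Hᵀ.mulVec (r - H.mulVec φ))
      + ((1 : Matrix (Fin p) (Fin p) ℝ) - K * H).mulVec w - K.mulVec v := by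
  have hS : (H * B * Hᵀ + R).PosDef := posDef_mul_mul_transpose_add H
    (hB ▸ PosSemidef.one.smul hε.le) (hR ▸ PosDef.one.smul (by positivity))
  refine ⟨hS, ?_⟩
  have hKS : K * (H * B * Hᵀ + R) = B * Hᵀ := by
    rw [hK, Matrix.mul_assoc, nonsing_inv_mul _ ((isUnit_iff_isUnit_det _).mp hS.isUnit),
      Matrix.mul_one]
  have hPH : (1 - K * H) * Hᵀ = (2 * σ ^ 2 / ε) • K := by
    have h := one_sub_mul_mul_mul_transpose_eq_mul_of_mul_eq hKS
    rw [hB, hR, Matrix.mul_smul, Matrix.mul_one, Matrix.smul_mul, Matrix.mul_smul,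
      Matrix.mul_one] at h
    rw [div_eq_inv_mul, mul_smul, ← h, inv_smul_smul₀ hε.ne']
  have hPHv (x : Fin n → ℝ) : (1 - K * H) *ᵥ (Hᵀ *ᵥ x) = (2 * σ ^ 2 / ε) • K *ᵥ x := by
    rw [mulVec_mulVec, hPH, smul_mulVec]
  have hcoef : ε / 2 * (m / N) * (N / (m * σ ^ 2)) * (2 * σ ^ 2 / ε) = 1 := by
    field_simp
  rw [hφa, hφf, hSg, smul_mulVec, mulVec_add (1 - K * H), mulVec_smul (1 - K * H), hPHv]
  simp only [mulVec_add, mulVec_sub, mulVec_smul, sub_mulVec, one_mulVec, ← mulVec_mulVec]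
  linear_combination (norm := module) -(hcoef • (K *ᵥ r - K *ᵥ H *ᵥ φ))

/-- Algebraic core of Lemma 1: the forecast–analysis step of the LKTD prototype
equals a preconditioned Langevin/SGLD step with preconditioner Σ. -/
theorem stmt_0 (n p : ℕ) (hn : 0 < n) (hp : 0 < p)
    (H : Matrix (Fin n) (Fin p) ℝ) (ε σ N m : ℝ)
    (hε : 0 < ε) (hσ : 0 < σ) (hN : 0 < N) (hm : 0 < m)
    (B : Matrix (Fin p) (Fin p) ℝ) (hB : B = ε • (1 : Matrix (Fin p) (Fin p) ℝ))
    (R : Matrix (Fin n) (Fin n) ℝ)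
    (hR : R = (2 * σ ^ 2) • (1 : Matrix (Fin n) (Fin n) ℝ))
    (K : Matrix (Fin p) (Fin n) ℝ) (hK : K = B * Hᵀ * (H * B * Hᵀ + R)⁻¹)
    (Sg : Matrix (Fin p) (Fin p) ℝ)
    (hSg : Sg = (m / N) • ((1 : Matrix (Fin p) (Fin p) ℝ) - K * H))
    (φ u w φf φa : Fin p → ℝ) (r v : Fin n → ℝ)
    (hφf : φf = φ + ((ε / 2) * (m / N)) • u + w)
    (hφa : φa = φf + K.mulVec (r - H.mulVec φf - v)) :
    (H * B * Hᵀ + R).PosDef ∧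
    φa = φ + (ε / 2) • Sg.mulVec (u + (N / (m * σ ^ 2)) • Hᵀ.mulVec (r - H.mulVec φ))
      + ((1 : Matrix (Fin p) (Fin p) ℝ) - K * H).mulVec w - K.mulVec v :=
  stmt_0_general n p H ε σ N m hε hσ hN hm B hB R hR K hK Sg hSg φ u w φf φa r v hφf hφa
end

section
/- Let H be a real n×p matrix, let R be a symmetric positive definite real n×n matrix, let ε₀ > 0, let c > 0, and let μ ≥ 0 be such that μ·I_p − Hᵀ R⁻¹ H is positive semidefinite. Then for every ε with 0 < ε ≤ ε₀, the matrix Σ = c·(I_p − ε Hᵀ (ε H Hᵀ + R)⁻¹ H) is symmetric positive definite, c·I_p − Σ is positive semidefinite, and Σ − (c/(1 + ε₀ μ))·I_p is positive semidefinite. In particular, the eigenvalues of Σ all lie in the interval [c/(1 + ε₀ μ), c], so Σ has bounded positive eigenvalues uniformly over all 0 < ε ≤ ε₀. -/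
/-!
The push-through identity turns the Kalman form into `Σ = c (I + ε Hᵀ R⁻¹ H)⁻¹`. In the Loewner
order `I ≤ I + ε Hᵀ R⁻¹ H ≤ (1 + ε₀ μ) I`, and inversion is order-reversing on positive definite
matrices, so `c / (1 + ε₀ μ) • I ≤ Σ ≤ c • I`; these bounds confine the spectrum of `Σ`.
-/

open Matrix

namespace Matrix

section Loewner
open scoped ComplexOrder
variable {n : Type*} [Fintype n] [DecidableEq n] {𝕜 : Type*} [RCLike 𝕜]

theorem PosDef.posSemidef_inv_sub_inv {A B : Matrix n n 𝕜} (hA : A.PosDef)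
    (hAB : (B - A).PosSemidef) : (A⁻¹ - B⁻¹).PosSemidef := by
  have hB : B.PosDef := by simpa using hA.add_posSemidef hAB
  have hA' := (isUnit_iff_isUnit_det A).mp hA.isUnit
  have hB' := (isUnit_iff_isUnit_det B).mp hB.isUnit
  -- `A⁻¹ - B⁻¹ = B⁻¹ (B A⁻¹ B - B) B⁻¹` and `B A⁻¹ B - B = D + D A⁻¹ D` for `D = B - A`
  have key : A⁻¹ - B⁻¹ = B⁻¹ᴴ * ((B - A) + (B - A)ᴴ * A⁻¹ * (B - A)) * B⁻¹ := by
    rw [hB.isHermitian.inv.eq, hAB.isHermitian.eq]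
    simp only [mul_sub, sub_mul, mul_add, add_mul, Matrix.mul_assoc, nonsing_inv_mul _ hA',
      mul_nonsing_inv _ hA', mul_nonsing_inv _ hB', Matrix.mul_one]
    simp only [← Matrix.mul_assoc, nonsing_inv_mul _ hB', Matrix.one_mul]
    abel
  rw [key]
  exact (hAB.add (hA.inv.posSemidef.conjTranspose_mul_mul_same _)).conjTranspose_mul_mul_same _

open scoped MatrixOrder in
theorem spectrum_subset_Icc_of_posSemidef {A : Matrix n n 𝕜} {a b : ℝ}
    (ha : (A - a • 1).PosSemidef) (hb : (b • 1 - A).PosSemidef) :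
    spectrum ℝ A ⊆ Set.Icc a b := by
  have hA : A.IsHermitian := by
    simpa using (isHermitian_one.smul (IsSelfAdjoint.all b)).sub hb.isHermitian
  intro x hx
  refine ⟨(algebraMap_le_iff_le_spectrum hA).mp ?_ x hx,
    (le_algebraMap_iff_spectrum_le hA).mp ?_ x hx⟩
  · rwa [Algebra.algebraMap_eq_smul_one]
  · rwa [Algebra.algebraMap_eq_smul_one]

end Loewner

variable {n p α : Type*} [Fintype n] [DecidableEq n] [Fintype p] [DecidableEq p] [CommRing α]

theorem inv_one_add_smul_mul_inv_mul {U : Matrix p n α} {V : Matrix n p α} {R : Matrix n n α}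
    (ε : α) (hR : IsUnit R.det) (hA : IsUnit (ε • (V * U) + R).det) :
    (1 + ε • (U * R⁻¹ * V))⁻¹ = 1 - ε • (U * (ε • (V * U) + R)⁻¹ * V) := by
  set A := ε • (V * U) + R
  have hRA : R⁻¹ - A⁻¹ = ε • (R⁻¹ * (V * U) * A⁻¹) := by
    calc R⁻¹ - A⁻¹ = R⁻¹ * (A - R) * A⁻¹ := by
          rw [mul_sub, sub_mul, mul_nonsing_inv_cancel_right _ _ hA,
            Matrix.mul_assoc, nonsing_inv_mul_cancel_left _ _ hR]
      _ = ε • (R⁻¹ * (V * U) * A⁻¹) := by simp [A]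
  apply inv_eq_right_inv
  calc (1 + ε • (U * R⁻¹ * V)) * (1 - ε • (U * A⁻¹ * V))
      = 1 + ε • (U * (R⁻¹ - A⁻¹ - ε • (R⁻¹ * (V * U) * A⁻¹)) * V) := by
        simp only [Matrix.add_mul, Matrix.mul_sub, Matrix.sub_mul, Matrix.mul_smul,
          Matrix.smul_mul, Matrix.mul_assoc, Matrix.one_mul, Matrix.mul_one, smul_sub, smul_smul]
        module
    _ = 1 := by rw [hRA, sub_self, Matrix.mul_zero, Matrix.zero_mul, smul_zero, add_zero]

end Matrix

theorem stmt_4_general (n p : ℕ)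
    (H : Matrix (Fin n) (Fin p) ℝ)
    (R : Matrix (Fin n) (Fin n) ℝ) (hR : R.PosDef)
    (ε₀ c μ : ℝ) (hc : 0 < c) (hμ : 0 ≤ μ)
    (hμH : (μ • (1 : Matrix (Fin p) (Fin p) ℝ) - Hᵀ * R⁻¹ * H).PosSemidef) :
    ∀ (ε : ℝ) (S : Matrix (Fin p) (Fin p) ℝ), 0 < ε → ε ≤ ε₀ →
      S = c • ((1 : Matrix (Fin p) (Fin p) ℝ)
            - ε • (Hᵀ * (ε • (H * Hᵀ) + R)⁻¹ * H)) →
      S.PosDef ∧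
      (c • (1 : Matrix (Fin p) (Fin p) ℝ) - S).PosSemidef ∧
      (S - (c / (1 + ε₀ * μ)) • (1 : Matrix (Fin p) (Fin p) ℝ)).PosSemidef ∧
      ∀ x ∈ spectrum ℝ S, x ∈ Set.Icc (c / (1 + ε₀ * μ)) c := by
  intro ε S hε hεε₀ hS
  have hM : (Hᵀ * R⁻¹ * H).PosSemidef := by
    simpa using hR.inv.posSemidef.conjTranspose_mul_mul_same H
  have hA : (ε • (H * Hᵀ) + R).PosDef := by
    refine PosDef.posSemidef_add ?_ hR
    simpa using (posSemidef_self_mul_conjTranspose H).smul hε.le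
  set B := 1 + ε • (Hᵀ * R⁻¹ * H)
  rw [← inv_one_add_smul_mul_inv_mul ε ((isUnit_iff_isUnit_det R).mp hR.isUnit)
    ((isUnit_iff_isUnit_det _).mp hA.isUnit)] at hS
  have hB_one : (B - 1).PosSemidef := by simpa [B] using hM.smul hε.le
  have hB : B.PosDef := by simpa using PosDef.one.add_posSemidef hB_one
  have hB_le : ((1 + ε₀ * μ) • 1 - B).PosSemidef := by
    have h := ((PosSemidef.one.smul hμ).smul (sub_nonneg.mpr hεε₀)).add (hμH.smul hε.le)
    convert h using 1
    simp only [B]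
    module
  have hupper : (c • 1 - S).PosSemidef := by
    simpa [hS, smul_sub] using (PosDef.one.posSemidef_inv_sub_inv hB_one).smul hc.le
  have hlower : (S - (c / (1 + ε₀ * μ)) • 1).PosSemidef := by
    have ht : 1 + ε₀ * μ ≠ 0 := by
      have := hε.trans_le hεε₀
      positivity
    have hinv : ((1 + ε₀ * μ) • (1 : Matrix (Fin p) (Fin p) ℝ))⁻¹ = (1 + ε₀ * μ)⁻¹ • 1 :=
      inv_eq_left_inv (by simp [smul_smul, ht])
    simpa [hS, hinv, smul_sub, smul_smul, div_eq_mul_inv] using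
      (hB.posSemidef_inv_sub_inv hB_le).smul hc.le
  exact ⟨hS ▸ hB.inv.smul hc, hupper, hlower,
    spectrum_subset_Icc_of_posSemidef hlower hupper⟩

/-- The LKTD preconditioner `Σ = c (I − ε Hᵀ(ε H Hᵀ + R)⁻¹H)` is symmetric
positive definite with eigenvalues in `[c/(1+ε₀μ), c]`, uniformly over all
learning rates `0 < ε ≤ ε₀`. -/
theorem stmt_4 (n p : ℕ)
    (H : Matrix (Fin n) (Fin p) ℝ)
    (R : Matrix (Fin n) (Fin n) ℝ) (hR : R.PosDef)
    (ε₀ c μ : ℝ) (hε₀ : 0 < ε₀) (hc : 0 < c) (hμ : 0 ≤ μ)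
    (hμH : (μ • (1 : Matrix (Fin p) (Fin p) ℝ) - Hᵀ * R⁻¹ * H).PosSemidef) :
    ∀ (ε : ℝ) (S : Matrix (Fin p) (Fin p) ℝ), 0 < ε → ε ≤ ε₀ →
      S = c • ((1 : Matrix (Fin p) (Fin p) ℝ)
            - ε • (Hᵀ * (ε • (H * Hᵀ) + R)⁻¹ * H)) →
      S.PosDef ∧
      (c • (1 : Matrix (Fin p) (Fin p) ℝ) - S).PosSemidef ∧
      (S - (c / (1 + ε₀ * μ)) • (1 : Matrix (Fin p) (Fin p) ℝ)).PosSemidef ∧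
      ∀ x ∈ spectrum ℝ S, x ∈ Set.Icc (c / (1 + ε₀ * μ)) c :=
  stmt_4_general n p H R hR ε₀ c μ hc hμ hμH
end

section
/- Let (Ω, F, P) be a probability space and let θ, G, e be square-integrable random vectors in ℝ^d. Let ε > 0, β > 0, m > 0, b ≥ 0, M ≥ 0, B ≥ 0 and suppose: (i) E⟨θ, G⟩ ≥ m·E‖θ‖² − b; (ii) E‖G‖² ≤ 2M²·E‖θ‖² + 2B²; (iii) E⟨θ − εG, e⟩ = 0 and E⟨e, e⟩ = d (as holds when e is a standard Gaussian vector independent of (θ, G)). Then the SGLD update θ' = θ − εG + √(2ε/β)·e satisfies E‖θ'‖² ≤ (1 − 2εm + 2ε²M²)·E‖θ‖² + 2εb + 2ε²B² + 2εd/β. -/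
open MeasureTheory
open scoped RealInnerProductSpace

/-! Expanding the square, (iii) kills the cross term with the noise and makes the noise
contribute `(2ε/β)·d`; the drift part `‖θ - εG‖² = ‖θ‖² - 2ε⟪θ, G⟫ + ε²‖G‖²` is then bounded
in expectation by (i) and (ii). -/

namespace MeasureTheory

variable {Ω E : Type*} [MeasurableSpace Ω] {P : Measure Ω}
  [NormedAddCommGroup E] [InnerProductSpace ℝ E] {X Y : Ω → E}

theorem MemLp.integrable_inner (hX : MemLp X 2 P) (hY : MemLp Y 2 P) :
    Integrable (fun ω => ⟪X ω, Y ω⟫) P :=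
  (L2.integrable_inner (𝕜 := ℝ) (hX.toLp X) (hY.toLp Y)).congr <| by
    filter_upwards [hX.coeFn_toLp, hY.coeFn_toLp] with ω hXω hYω
    rw [hXω, hYω]

theorem integral_norm_add_smul_sq (hX : MemLp X 2 P) (hY : MemLp Y 2 P) (c : ℝ) :
    ∫ ω, ‖X ω + c • Y ω‖ ^ 2 ∂P
      = ∫ ω, ‖X ω‖ ^ 2 ∂P + 2 * c * ∫ ω, ⟪X ω, Y ω⟫ ∂P + c ^ 2 * ∫ ω, ‖Y ω‖ ^ 2 ∂P := by
  have hX2 := (memLp_two_iff_integrable_sq_norm hX.1).1 hX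
  have hY2 := (memLp_two_iff_integrable_sq_norm hY.1).1 hY
  have hXY := hX.integrable_inner hY
  have expand : ∀ ω, ‖X ω + c • Y ω‖ ^ 2
      = ‖X ω‖ ^ 2 + 2 * c * ⟪X ω, Y ω⟫ + c ^ 2 * ‖Y ω‖ ^ 2 := fun ω => by
    rw [norm_add_sq_real, real_inner_smul_right, norm_smul, mul_pow, Real.norm_eq_abs, sq_abs]
    ring
  simp_rw [expand]
  rw [integral_add _ (hY2.const_mul _), integral_add hX2 (hXY.const_mul _),
    integral_const_mul, integral_const_mul]
  exact hX2.add (hXY.const_mul _)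

theorem integral_norm_sub_smul_sq (hX : MemLp X 2 P) (hY : MemLp Y 2 P) (c : ℝ) :
    ∫ ω, ‖X ω - c • Y ω‖ ^ 2 ∂P
      = ∫ ω, ‖X ω‖ ^ 2 ∂P - 2 * c * ∫ ω, ⟪X ω, Y ω⟫ ∂P + c ^ 2 * ∫ ω, ‖Y ω‖ ^ 2 ∂P := by
  simp_rw [sub_eq_add_neg, ← neg_smul]
  rw [integral_norm_add_smul_sq hX hY]
  ring

end MeasureTheory

theorem stmt_7_general {Ω : Type*} [MeasurableSpace Ω] (P : Measure Ω)
    (d : ℕ)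
    (θ G e : Ω → EuclideanSpace ℝ (Fin d))
    (hθ : MemLp θ 2 P) (hG : MemLp G 2 P) (he : MemLp e 2 P)
    (ε β m b M B : ℝ) (hε : 0 < ε) (hβ : 0 < β)
    (h1 : m * (∫ ω, ‖θ ω‖ ^ 2 ∂P) - b ≤ ∫ ω, ⟪θ ω, G ω⟫ ∂P)
    (h2 : (∫ ω, ‖G ω‖ ^ 2 ∂P) ≤ 2 * M ^ 2 * (∫ ω, ‖θ ω‖ ^ 2 ∂P) + 2 * B ^ 2)
    (h3 : (∫ ω, ⟪θ ω - ε • G ω, e ω⟫ ∂P) = 0)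
    (h4 : (∫ ω, ⟪e ω, e ω⟫ ∂P) = (d : ℝ)) :
    (∫ ω, ‖θ ω - ε • G ω + Real.sqrt (2 * ε / β) • e ω‖ ^ 2 ∂P) ≤
      (1 - 2 * ε * m + 2 * ε ^ 2 * M ^ 2) * (∫ ω, ‖θ ω‖ ^ 2 ∂P)
        + 2 * ε * b + 2 * ε ^ 2 * B ^ 2 + 2 * ε * (d : ℝ) / β := by
  have hstep : MemLp (fun ω => θ ω - ε • G ω) 2 P := hθ.sub (hG.const_smul ε)
  simp_rw [real_inner_self_eq_norm_sq] at h4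
  rw [integral_norm_add_smul_sq hstep he, h3, h4,
    integral_norm_sub_smul_sq hθ hG, Real.sq_sqrt (by positivity)]
  linear_combination (2 * ε) * h1 + ε ^ 2 * h2

/-- One-step second-moment contraction for the SGLD update
`θ' = θ − εG + √(2ε/β)·e`. -/
theorem stmt_7 {Ω : Type*} [MeasurableSpace Ω] (P : Measure Ω)
    [IsProbabilityMeasure P] (d : ℕ)
    (θ G e : Ω → EuclideanSpace ℝ (Fin d))
    (hθ : MemLp θ 2 P) (hG : MemLp G 2 P) (he : MemLp e 2 P)
    (ε β m b M B : ℝ) (hε : 0 < ε) (hβ : 0 < β) (hm : 0 < m) (hb : 0 ≤ b)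
    (hM : 0 ≤ M) (hB : 0 ≤ B)
    (h1 : m * (∫ ω, ‖θ ω‖ ^ 2 ∂P) - b ≤ ∫ ω, ⟪θ ω, G ω⟫ ∂P)
    (h2 : (∫ ω, ‖G ω‖ ^ 2 ∂P) ≤ 2 * M ^ 2 * (∫ ω, ‖θ ω‖ ^ 2 ∂P) + 2 * B ^ 2)
    (h3 : (∫ ω, ⟪θ ω - ε • G ω, e ω⟫ ∂P) = 0)
    (h4 : (∫ ω, ⟪e ω, e ω⟫ ∂P) = (d : ℝ)) :
    (∫ ω, ‖θ ω - ε • G ω + Real.sqrt (2 * ε / β) • e ω‖ ^ 2 ∂P) ≤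
      (1 - 2 * ε * m + 2 * ε ^ 2 * M ^ 2) * (∫ ω, ‖θ ω‖ ^ 2 ∂P)
        + 2 * ε * b + 2 * ε ^ 2 * B ^ 2 + 2 * ε * (d : ℝ) / β :=
  stmt_7_general P d θ G e hθ hG he ε β m b M B hε hβ h1 h2 h3 h4
end

section
/- Let (Z, 𝒜, μ) be a measure space, d and q positive natural numbers, and let G : Z → ℝ^d be measurable with ∫_Z ‖G(z)‖² dμ(z) ≤ M for some M ≥ 0. Let θ ↦ p_θ be a family of measurable real-valued functions on Z indexed by θ ∈ ℝ^q, each square-integrable, satisfying the Lipschitz condition ∫_Z |p_θ(z) − p_ϑ(z)|² dμ(z) ≤ L·‖θ − ϑ‖² for all θ, ϑ and some L ≥ 0. Then for any θ, θ₁, …, θ_R ∈ ℝ^q (R ≥ 1), writing p̄ = (1/R)·Σ_{i=1}^{R} p_{θ_i}, the Bochner integral b = ∫_Z G(z)·(p̄(z) − p_θ(z)) dμ(z) is well defined and satisfies ‖b‖² ≤ (M·L/R)·Σ_{i=1}^{R} ‖θ_i − θ‖². -/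
/-! Write `f = p̄ − p_θ`. Cauchy–Schwarz (Hölder with exponents `2, 2, 1`) gives
`‖∫ f • G‖² ≤ ‖f‖₂² ‖G‖₂² ≤ M ‖f‖₂²`. Since `f = (1/R) Σᵢ (p_{θᵢ} − p_θ)`, convexity of `x ↦ x²`
bounds `f²` pointwise by the average of the `(p_{θᵢ} − p_θ)²`, so `‖f‖₂² ≤ (L/R) Σᵢ ‖θᵢ − θ‖²`. -/

open MeasureTheory Finset

section

variable {Z : Type*} [MeasurableSpace Z] {μ : Measure Z}

lemma eLpNorm_two_sq_eq_lintegral {ε : Type*} [ENorm ε] (f : Z → ε) :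
    eLpNorm f 2 μ ^ 2 = ∫⁻ z, ‖f z‖ₑ ^ 2 ∂μ := by
  simpa using eLpNorm_nnreal_pow_eq_lintegral (μ := μ) (f := f) (p := 2) two_ne_zero

lemma memLp_two_of_lintegral_sq_lt_top {E : Type*} [NormedAddCommGroup E] {f : Z → E}
    (hf : AEStronglyMeasurable f μ) (h : ∫⁻ z, ‖f z‖ₑ ^ 2 ∂μ < ⊤) : MemLp f 2 μ := by
  rw [← eLpNorm_two_sq_eq_lintegral, ENNReal.pow_lt_top_iff] at h
  exact ⟨hf, h.resolve_right two_ne_zero⟩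

variable {E : Type*} [NormedAddCommGroup E] [NormedSpace ℝ E]

lemma enorm_integral_smul_sq_le {f : Z → ℝ} {G : Z → E} (hf : AEStronglyMeasurable f μ)
    (hG : AEStronglyMeasurable G μ) :
    ‖∫ z, f z • G z ∂μ‖ₑ ^ 2 ≤ (∫⁻ z, ‖f z‖ₑ ^ 2 ∂μ) * ∫⁻ z, ‖G z‖ₑ ^ 2 ∂μ := by
  rw [← eLpNorm_two_sq_eq_lintegral, ← eLpNorm_two_sq_eq_lintegral, ← mul_pow]
  gcongr
  calc ‖∫ z, f z • G z ∂μ‖ₑ ≤ eLpNorm (f • G) 1 μ :=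
        (enorm_integral_le_lintegral_enorm _).trans_eq eLpNorm_one_eq_lintegral_enorm.symm
    _ ≤ eLpNorm f 2 μ * eLpNorm G 2 μ := eLpNorm_smul_le_mul_eLpNorm hG hf

lemma integrable_smul_of_lintegral_sq_lt_top {f : Z → ℝ} {G : Z → E}
    (hf : AEStronglyMeasurable f μ) (hG : AEStronglyMeasurable G μ)
    (hf2 : ∫⁻ z, ‖f z‖ₑ ^ 2 ∂μ < ⊤) (hG2 : ∫⁻ z, ‖G z‖ₑ ^ 2 ∂μ < ⊤) :
    Integrable (fun z => f z • G z) μ :=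
  memLp_one_iff_integrable.1 <|
    (memLp_two_of_lintegral_sq_lt_top hG hG2).smul (memLp_two_of_lintegral_sq_lt_top hf hf2)

lemma norm_integral_smul_sq_le {f : Z → ℝ} {G : Z → E} (hf : AEStronglyMeasurable f μ)
    (hG : AEStronglyMeasurable G μ) {a b : ℝ} (ha : 0 ≤ a) (hb : 0 ≤ b)
    (hfa : ∫⁻ z, ‖f z‖ₑ ^ 2 ∂μ ≤ ENNReal.ofReal a) (hGb : ∫⁻ z, ‖G z‖ₑ ^ 2 ∂μ ≤ ENNReal.ofReal b) :
    ‖∫ z, f z • G z ∂μ‖ ^ 2 ≤ a * b := by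
  rw [← ENNReal.ofReal_le_ofReal_iff (by positivity), ENNReal.ofReal_pow (norm_nonneg _),
    ofReal_norm, ENNReal.ofReal_mul ha]
  exact (enorm_integral_smul_sq_le hf hG).trans (mul_le_mul' hfa hGb)

end

lemma enorm_sq_eq_ofReal_sq (x : ℝ) : ‖x‖ₑ ^ 2 = ENNReal.ofReal (x ^ 2) := by
  rw [Real.enorm_eq_ofReal_abs, ← ENNReal.ofReal_pow (abs_nonneg x), sq_abs]

lemma sq_average_sub_le {ι : Type*} (s : Finset ι) (a : ι → ℝ) (b : ℝ) (hs : s.Nonempty) :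
    ((1 / #s) * ∑ i ∈ s, a i - b) ^ 2 ≤ (1 / #s) * ∑ i ∈ s, (a i - b) ^ 2 := by
  have hcard : (#s : ℝ) ≠ 0 := by exact_mod_cast hs.card_pos.ne'
  have : (1 / #s) * ∑ i ∈ s, a i - b = (∑ i ∈ s, (a i - b)) / #s := by
    rw [sum_sub_distrib, sum_const, nsmul_eq_mul]
    field_simp
  rw [this, one_div_mul_eq_div]
  exact sum_div_card_sq_le_sum_sq_div_card

lemma lintegral_sq_average_sub_le {Z ι : Type*} [MeasurableSpace Z] {μ : Measure Z}
    {s : Finset ι} (hs : s.Nonempty) {g : ι → Z → ℝ} {h : Z → ℝ}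
    (hg : ∀ i ∈ s, AEMeasurable (g i) μ) (hh : AEMeasurable h μ) {c : ι → ℝ}
    (hc : ∀ i ∈ s, 0 ≤ c i) (hgc : ∀ i ∈ s, ∫⁻ z, ‖g i z - h z‖ₑ ^ 2 ∂μ ≤ ENNReal.ofReal (c i)) :
    ∫⁻ z, ‖(1 / #s) * ∑ i ∈ s, g i z - h z‖ₑ ^ 2 ∂μ ≤
      ENNReal.ofReal ((1 / #s) * ∑ i ∈ s, c i) := by
  calc ∫⁻ z, ‖(1 / #s) * ∑ i ∈ s, g i z - h z‖ₑ ^ 2 ∂μ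
      ≤ ∫⁻ z, ENNReal.ofReal (1 / #s) * ∑ i ∈ s, ‖g i z - h z‖ₑ ^ 2 ∂μ := by
        refine lintegral_mono fun z => ?_
        simp only [enorm_sq_eq_ofReal_sq]
        rw [← ENNReal.ofReal_sum_of_nonneg (fun i _ => sq_nonneg _),
          ← ENNReal.ofReal_mul (by positivity)]
        exact ENNReal.ofReal_le_ofReal (sq_average_sub_le s _ _ hs)
    _ = ENNReal.ofReal (1 / #s) * ∑ i ∈ s, ∫⁻ z, ‖g i z - h z‖ₑ ^ 2 ∂μ := by
        rw [lintegral_const_mul' _ _ ENNReal.ofReal_ne_top,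
          lintegral_finsetSum' (f := fun i z => ‖g i z - h z‖ₑ ^ 2) _
            fun i hi => ((hg i hi).sub hh).enorm.pow_const 2]
    _ ≤ ENNReal.ofReal (1 / #s) * ∑ i ∈ s, ENNReal.ofReal (c i) := by
        gcongr with i hi
        exact hgc i hi
    _ = ENNReal.ofReal ((1 / #s) * ∑ i ∈ s, c i) := by
        rw [ENNReal.ofReal_mul (by positivity), ENNReal.ofReal_sum_of_nonneg hc]

theorem stmt_13_general {Z : Type*} [MeasurableSpace Z] (μ : Measure Z)
    (d q : ℕ)
    (G : Z → EuclideanSpace ℝ (Fin d)) (hGmeas : Measurable G)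
    (M : ℝ) (hM : 0 ≤ M)
    (hG2 : (∫⁻ z, (‖G z‖₊ : ENNReal) ^ 2 ∂μ) ≤ ENNReal.ofReal M)
    (p : EuclideanSpace ℝ (Fin q) → Z → ℝ)
    (hpmeas : ∀ θ, Measurable (p θ))
    (L : ℝ) (hL : 0 ≤ L)
    (hLip : ∀ θ ϑ : EuclideanSpace ℝ (Fin q),
      (∫⁻ z, (‖p θ z - p ϑ z‖₊ : ENNReal) ^ 2 ∂μ) ≤
        ENNReal.ofReal (L * ‖θ - ϑ‖ ^ 2))
    (R : ℕ) (hR : 1 ≤ R)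
    (θ : EuclideanSpace ℝ (Fin q)) (θs : Fin R → EuclideanSpace ℝ (Fin q)) :
    Integrable
      (fun z => ((1 / (R : ℝ)) * ∑ i, p (θs i) z - p θ z) • G z) μ ∧
    ‖∫ z, ((1 / (R : ℝ)) * ∑ i, p (θs i) z - p θ z) • G z ∂μ‖ ^ 2 ≤
      M * L / (R : ℝ) * ∑ i, ‖θs i - θ‖ ^ 2 := by
  have hbias := lintegral_sq_average_sub_le (μ := μ) (univ_nonempty_iff.2 ⟨(⟨0, hR⟩ : Fin R)⟩)
    (fun i _ => (hpmeas (θs i)).aemeasurable) (hpmeas θ).aemeasurable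
    (fun i _ => by positivity) (fun i _ => hLip (θs i) θ)
  rw [card_univ, Fintype.card_fin] at hbias
  have hf : AEStronglyMeasurable (fun z => (1 / (R : ℝ)) * ∑ i, p (θs i) z - p θ z) μ :=
    (by fun_prop : Measurable _).aestronglyMeasurable
  refine ⟨integrable_smul_of_lintegral_sq_lt_top hf hGmeas.aestronglyMeasurable
    (hbias.trans_lt ENNReal.ofReal_lt_top) (hG2.trans_lt ENNReal.ofReal_lt_top), ?_⟩
  calc _ ≤ ((1 / (R : ℝ)) * ∑ i, L * ‖θs i - θ‖ ^ 2) * M :=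
        norm_integral_smul_sq_le hf hGmeas.aestronglyMeasurable (by positivity) hM hbias hG2
    _ = M * L / (R : ℝ) * ∑ i, ‖θs i - θ‖ ^ 2 := by
        rw [← mul_sum]
        ring

/-- Bound on the replay-buffer gradient bias (the key intermediate bound (A31)
in Theorem 2): `‖∫ G · (p̄ − p_θ) dμ‖² ≤ (M L / R) Σᵢ ‖θᵢ − θ‖²`. -/
theorem stmt_13 {Z : Type*} [MeasurableSpace Z] (μ : Measure Z)
    (d q : ℕ) (hd : 0 < d) (hq : 0 < q)
    (G : Z → EuclideanSpace ℝ (Fin d)) (hGmeas : Measurable G)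
    (M : ℝ) (hM : 0 ≤ M)
    (hG2 : (∫⁻ z, (‖G z‖₊ : ENNReal) ^ 2 ∂μ) ≤ ENNReal.ofReal M)
    (p : EuclideanSpace ℝ (Fin q) → Z → ℝ)
    (hpmeas : ∀ θ, Measurable (p θ))
    (hpL2 : ∀ θ, MemLp (p θ) 2 μ)
    (L : ℝ) (hL : 0 ≤ L)
    (hLip : ∀ θ ϑ : EuclideanSpace ℝ (Fin q),
      (∫⁻ z, (‖p θ z - p ϑ z‖₊ : ENNReal) ^ 2 ∂μ) ≤
        ENNReal.ofReal (L * ‖θ - ϑ‖ ^ 2))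
    (R : ℕ) (hR : 1 ≤ R)
    (θ : EuclideanSpace ℝ (Fin q)) (θs : Fin R → EuclideanSpace ℝ (Fin q)) :
    Integrable
      (fun z => ((1 / (R : ℝ)) * ∑ i, p (θs i) z - p θ z) • G z) μ ∧
    ‖∫ z, ((1 / (R : ℝ)) * ∑ i, p (θs i) z - p θ z) • G z ∂μ‖ ^ 2 ≤
      M * L / (R : ℝ) * ∑ i, ‖θs i - θ‖ ^ 2 :=
  stmt_13_general μ d q G hGmeas M hM hG2 p hpmeas L hL hLip R hR θ θs
end
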